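/- arXiv:1201.2599 — 2 statements merged into one kernel-verified Lean document; each statement's English description precedes it below -/
import Mathlib

section
/- Consequently, if there exists Λ ∈ ℝ such that lim_{t→∞} (1/t) log ‖X_t‖_{M2} = Λ for a continuous X : [-1,∞) → ℝ with X_t never identically zero, then also lim_{t→∞} (1/t) log ‖X_t‖_∞ = Λ, where ‖·‖_∞ is the sup-norm on C([-1,0],ℝ). -/
/-!
Both norms are comparable up to a one-unit time lag: `‖X_t‖_{M2} ≤ √2 ‖X_t‖_∞`, while each value
`|X(t+s)|`, `s ∈ [-1,0]`, is at most `‖X_{t+s}‖_{M2}`. After taking logarithms and dividing by `t`,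
the constant `log √2` and the lag of one time unit both disappear in the limit.
-/

open Filter Set Topology

section Asymptotics

variable {F G : ℝ → ℝ} {Λ b : ℝ}

theorem exists_lt_eventually_forall_Icc_le_mul (hF : Tendsto (fun t => (1 / t) * F t) atTop (𝓝 Λ))
    (hb : Λ < b) (L : ℝ) : ∃ c < b, ∀ᶠ t in atTop, ∀ s ∈ Icc (-L) 0, F (t + s) ≤ c * t := by
  obtain ⟨c', hΛc', hc'b⟩ := exists_between hb
  refine ⟨(c' + b) / 2, by linarith, ?_⟩
  have hF' : ∀ᶠ u in atTop, F u ≤ c' * u := by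
    filter_upwards [hF.eventually (gt_mem_nhds hΛc'), eventually_gt_atTop 0] with u hu hu0
    rw [one_div, inv_mul_lt_iff₀ hu0] at hu
    linarith
  obtain ⟨T, hT⟩ := eventually_atTop.1 hF'
  filter_upwards [eventually_ge_atTop (T + L), eventually_ge_atTop (2 * |c'| * L / (b - c'))]
    with t hTt hLt s hs
  have hlag : c' * s ≤ |c'| * L := by
    nlinarith [mul_nonneg (neg_le_iff_add_nonneg.1 (neg_abs_le c')) (neg_nonneg.2 hs.2),
      mul_nonneg (abs_nonneg c') (by linarith [hs.1] : 0 ≤ L + s)]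
  have hgap : 2 * |c'| * L ≤ (b - c') * t := by
    rwa [div_le_iff₀ (by linarith), mul_comm t] at hLt
  calc F (t + s) ≤ c' * (t + s) := hT _ (by linarith [hs.1])
    _ ≤ (c' + b) / 2 * t := by linarith

theorem tendsto_one_div_mul_of_sandwich {C L : ℝ}
    (hF : Tendsto (fun t => (1 / t) * F t) atTop (𝓝 Λ))
    (hlow : ∀ᶠ t in atTop, F t - C ≤ G t)
    (hup : ∀ᶠ t in atTop, ∀ c, (∀ s ∈ Icc (-L) 0, F (t + s) ≤ c) → G t ≤ c) :
    Tendsto (fun t => (1 / t) * G t) atTop (𝓝 Λ) := by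
  rw [tendsto_order]
  refine ⟨fun a ha => ?_, fun b hb => ?_⟩
  · have hFC : Tendsto (fun t => (1 / t) * (F t - C)) atTop (𝓝 Λ) := by
      simpa [mul_sub, one_div] using hF.sub (tendsto_inv_atTop_zero.mul_const C)
    filter_upwards [hFC.eventually (lt_mem_nhds ha), hlow, eventually_gt_atTop 0]
      with t hat hFG ht
    exact hat.trans_le (by gcongr)
  · obtain ⟨c, hcb, hc⟩ := exists_lt_eventually_forall_Icc_le_mul hF hb L
    filter_upwards [hc, hup, eventually_gt_atTop 0] with t hFc hGc ht
    calc (1 / t) * G t ≤ (1 / t) * (c * t) := by gcongr; exact hGc _ hFc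
      _ = c := by field_simp
      _ < b := hcb

end Asymptotics

section SegmentNorms

/-- `‖φ‖_{M2}`; applied to the segment `fun s => X (t + s)` it is `‖X_t‖_{M2}`. -/
noncomputable def m2Norm (φ : ℝ → ℝ) : ℝ := √(φ 0 ^ 2 + ∫ s in (-1 : ℝ)..0, φ s ^ 2)

noncomputable def supNorm (φ : ℝ → ℝ) : ℝ := ⨆ s : Icc (-1 : ℝ) 0, |φ s|

variable {φ : ℝ → ℝ}

theorem abs_apply_zero_le_m2Norm (φ : ℝ → ℝ) : |φ 0| ≤ m2Norm φ := by
  rw [m2Norm, ← Real.sqrt_sq_eq_abs]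
  exact Real.sqrt_le_sqrt (le_add_of_nonneg_right
    (intervalIntegral.integral_nonneg (by norm_num) fun _ _ => sq_nonneg _))

theorem m2Norm_pos (hφ : ContinuousOn φ (Icc (-1) 0)) (hne : ∃ s ∈ Icc (-1 : ℝ) 0, φ s ≠ 0) :
    0 < m2Norm φ := by
  obtain ⟨s, hs, hφs⟩ := hne
  have hint : 0 < ∫ s in (-1 : ℝ)..0, φ s ^ 2 :=
    intervalIntegral.integral_pos (by norm_num) (hφ.pow 2) (fun _ _ => sq_nonneg _)
      ⟨s, hs, by positivity⟩
  exact Real.sqrt_pos.2 (by positivity)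

theorem abs_le_supNorm (hφ : ContinuousOn φ (Icc (-1) 0)) {s : ℝ} (hs : s ∈ Icc (-1 : ℝ) 0) :
    |φ s| ≤ supNorm φ := by
  have hbdd : BddAbove (range fun s : Icc (-1 : ℝ) 0 => |φ s|) := by
    refine (isCompact_Icc.image_of_continuousOn hφ.abs).bddAbove.mono ?_
    rintro _ ⟨⟨s, hs⟩, rfl⟩
    exact ⟨s, hs, rfl⟩
  exact le_ciSup hbdd ⟨s, hs⟩

theorem supNorm_pos (hφ : ContinuousOn φ (Icc (-1) 0)) (hne : ∃ s ∈ Icc (-1 : ℝ) 0, φ s ≠ 0) :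
    0 < supNorm φ := by
  obtain ⟨s, hs, hφs⟩ := hne
  exact (abs_pos.2 hφs).trans_le (abs_le_supNorm hφ hs)

theorem supNorm_le {c : ℝ} (h : ∀ s ∈ Icc (-1 : ℝ) 0, |φ s| ≤ c) : supNorm φ ≤ c :=
  have : Nonempty (Icc (-1 : ℝ) 0) := ⟨⟨0, by norm_num, le_rfl⟩⟩
  ciSup_le fun s => h s s.2

theorem m2Norm_le_sqrt_two_mul_supNorm (hφ : ContinuousOn φ (Icc (-1) 0)) :
    m2Norm φ ≤ √2 * supNorm φ := by
  have hsq : ∀ s ∈ Icc (-1 : ℝ) 0, φ s ^ 2 ≤ supNorm φ ^ 2 := fun s hs => by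
    rw [← sq_abs]
    exact pow_le_pow_left₀ (abs_nonneg _) (abs_le_supNorm hφ hs) 2
  have hint : ∫ s in (-1 : ℝ)..0, φ s ^ 2 ≤ supNorm φ ^ 2 := by
    simpa using intervalIntegral.integral_mono_on (by norm_num)
      ((hφ.pow 2).intervalIntegrable_of_Icc (μ := MeasureTheory.volume) (by norm_num))
      intervalIntegrable_const hsq
  have hS : 0 ≤ supNorm φ := Real.iSup_nonneg fun _ => abs_nonneg _
  rw [m2Norm, ← Real.sqrt_sq hS, ← Real.sqrt_mul zero_le_two]
  exact Real.sqrt_le_sqrt (by linarith [hsq 0 ⟨by norm_num, le_rfl⟩])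

end SegmentNorms

/-- If `(1/t) log ‖X_t‖_{M2} → Λ` for continuous `X : [-1,∞) → ℝ` whose segments are never
identically zero, then also `(1/t) log ‖X_t‖_∞ → Λ`. -/
theorem stmt6 (X : ℝ → ℝ) (hX : ContinuousOn X (Set.Ici (-1 : ℝ)))
    (hnz : ∀ t : ℝ, 0 ≤ t → ∃ s ∈ Set.Icc (-1 : ℝ) 0, X (t + s) ≠ 0)
    (Λ : ℝ)
    (hM2 : Tendsto
      (fun t : ℝ => (1 / t) *
        Real.log (Real.sqrt ((X t) ^ 2 + ∫ s in (-1 : ℝ)..0, (X (t + s)) ^ 2)))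
      atTop (nhds Λ)) :
    Tendsto
      (fun t : ℝ => (1 / t) * Real.log (⨆ s : Set.Icc (-1 : ℝ) 0, |X (t + s.1)|))
      atTop (nhds Λ) := by
  have hseg : ∀ t, 0 ≤ t → ContinuousOn (fun s => X (t + s)) (Icc (-1) 0) := fun t ht =>
    hX.comp (by fun_prop) fun s hs => show -1 ≤ t + s by linarith [hs.1]
  replace hM2 : Tendsto (fun t => (1 / t) * Real.log (m2Norm fun s => X (t + s))) atTop (𝓝 Λ) := by
    simpa only [m2Norm, add_zero] using hM2
  refine tendsto_one_div_mul_of_sandwich (G := fun t => Real.log (supNorm fun s => X (t + s)))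
    (C := Real.log √2) (L := 1) hM2 ?_ ?_
  · filter_upwards [eventually_ge_atTop 0] with t ht
    have hlog := Real.log_le_log (m2Norm_pos (hseg t ht) (hnz t ht))
      (m2Norm_le_sqrt_two_mul_supNorm (hseg t ht))
    rw [Real.log_mul (by positivity) (supNorm_pos (hseg t ht) (hnz t ht)).ne'] at hlog
    linarith
  · filter_upwards [eventually_ge_atTop 1] with t ht c hc
    refine (Real.log_le_iff_le_exp (supNorm_pos (hseg t (by linarith)) (hnz t (by linarith)))).2 ?_
    refine supNorm_le fun s hs => ?_
    simpa using (abs_apply_zero_le_m2Norm fun r => X (t + s + r)).trans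
      (Real.le_exp_of_log_le (hc s hs))
end

section
/- Let (A_n)_{n≥0} be events adapted to a filtration (F_n) such that P(A_n ∪ A_{n−1} | F_{n−2}) ≥ q a.s. on A_{n−2}^c for all n ≥ 2, where q ∈ (0,1). Then almost surely infinitely many A_n occur. -/
open MeasureTheory Filter

lemma helper14 (g : ℕ → ℝ) (hg : ∀ k, 0 ≤ g k) {q : ℝ} (hq : 0 < q)
    (hfreq : ∃ᶠ k in atTop, q ≤ g k) :
    Tendsto (fun n => ∑ k ∈ Finset.range n, g k) atTop atTop := by
  have hmono : Monotone fun n => ∑ k ∈ Finset.range n, g k :=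
    monotone_nat_of_le_succ fun n => by
      rw [Finset.sum_range_succ]; exact le_add_of_nonneg_right (hg n)
  apply tendsto_atTop_atTop_of_monotone hmono
  intro b
  obtain ⟨m, hm⟩ := exists_nat_ge (b / q)
  have hinf : {k | q ≤ g k}.Infinite := Nat.frequently_atTop_iff_infinite.mp hfreq
  obtain ⟨F, hFsub, hFcard⟩ := hinf.exists_subset_card_eq m
  set N := F.sup id with hN
  refine ⟨N + 1, ?_⟩
  have h1 : (m : ℝ) * q ≤ ∑ k ∈ F, g k := by
    calc (m : ℝ) * q = ∑ _k ∈ F, q := by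
          rw [Finset.sum_const, hFcard, nsmul_eq_mul]
      _ ≤ ∑ k ∈ F, g k := Finset.sum_le_sum fun k hk => hFsub hk
  have h2 : ∑ k ∈ F, g k ≤ ∑ k ∈ Finset.range (N + 1), g k := by
    refine Finset.sum_le_sum_of_subset_of_nonneg ?_ fun k _ _ => hg k
    intro k hk
    exact Finset.mem_range.mpr (Nat.lt_succ_of_le (Finset.le_sup (f := id) hk))
  have hb : b ≤ (m : ℝ) * q := (div_le_iff₀ hq).mp hm
  linarith

/-- If `(A_n)` are adapted events with `P(A_n ∪ A_{n−1} | F_{n−2}) ≥ q` a.s. on `A_{n−2}ᶜ`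
for all `n ≥ 2`, where `q ∈ (0,1)`, then almost surely infinitely many `A_n` occur. -/
theorem stmt14 {Ω : Type*} {m0 : MeasurableSpace Ω} (μ : Measure Ω) [IsProbabilityMeasure μ]
    (ℱ : Filtration ℕ m0) (A : ℕ → Set Ω)
    (hA : ∀ n, MeasurableSet[ℱ n] (A n))
    (q : ℝ) (hq : q ∈ Set.Ioo (0 : ℝ) 1)
    (hcond : ∀ n : ℕ, 2 ≤ n →
      ∀ᵐ ω ∂μ, ω ∈ (A (n - 2))ᶜ →
        q ≤ (μ[Set.indicator (A n ∪ A (n - 1)) (fun _ => (1 : ℝ)) | ℱ (n - 2)]) ω) :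
    ∀ᵐ ω ∂μ, ∃ᶠ n in atTop, ω ∈ A n := by
  obtain ⟨hq0, _⟩ := hq
  let ℱ' : Filtration ℕ m0 :=
    ⟨fun n => ℱ (2 * n + 1), fun i j hij => ℱ.mono (by omega), fun n => ℱ.le _⟩
  let s : ℕ → Set Ω := fun n => A (2 * n) ∪ A (2 * n + 1)
  have hs : ∀ n, MeasurableSet[ℱ' n] (s n) := fun n =>
    ((ℱ.mono (by omega : 2 * n ≤ 2 * n + 1) _ (hA (2 * n))).union (hA (2 * n + 1)))
  have hlimsup := MeasureTheory.ae_mem_limsup_atTop_iff (ℱ := ℱ') μ hs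
  have hcond' : ∀ k : ℕ, ∀ᵐ ω ∂μ, ω ∉ A (2 * k + 1) →
      q ≤ (μ[(s (k + 1)).indicator (1 : Ω → ℝ) | ℱ' k]) ω := by
    intro k
    have h := hcond (2 * k + 3) (by omega)
    have h2 : 2 * k + 3 - 2 = 2 * k + 1 := by omega
    have h1 : 2 * k + 3 - 1 = 2 * k + 2 := by omega
    rw [h1, h2] at h
    have hset : s (k + 1) = A (2 * k + 3) ∪ A (2 * k + 2) := by
      have e1 : 2 * (k + 1) = 2 * k + 2 := by ring
      have e2 : 2 * (k + 1) + 1 = 2 * k + 3 := by ring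
      show A (2 * (k + 1)) ∪ A (2 * (k + 1) + 1) = _
      rw [e1, Set.union_comm]
    rw [hset]
    exact h
  have hnn : ∀ k : ℕ, ∀ᵐ ω ∂μ,
      (0 : ℝ) ≤ (μ[(s (k + 1)).indicator (1 : Ω → ℝ) | ℱ' k]) ω := by
    intro k
    have := condExp_nonneg (μ := μ) (m := ℱ' k)
      (f := (s (k + 1)).indicator (1 : Ω → ℝ))
      (Eventually.of_forall fun ω => Set.indicator_nonneg (fun _ _ => zero_le_one) ω)
    filter_upwards [this] with ω hω using hω
  filter_upwards [hlimsup, ae_all_iff.2 hcond', ae_all_iff.2 hnn] with ω hω hcondω hnnω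
  have hfreq_s : ∃ᶠ n in atTop, ω ∈ s n := by
    by_cases hf : ∃ᶠ k in atTop, q ≤ (μ[(s (k + 1)).indicator (1 : Ω → ℝ) | ℱ' k]) ω
    · have ht : Tendsto (fun n => ∑ k ∈ Finset.range n,
          (μ[(s (k + 1)).indicator (1 : Ω → ℝ) | ℱ' k]) ω) atTop atTop :=
        helper14 _ hnnω hq0 hf
      have hmem : ω ∈ limsup s atTop := hω.mpr ht
      exact mem_limsup_iff_frequently_mem.mp hmem
    · have hev : ∀ᶠ k in atTop, ω ∈ A (2 * k + 1) := by
        filter_upwards [not_frequently.mp hf] with k hk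
        by_contra h
        exact hk (hcondω k h)
      exact (hev.mono fun k hk => Set.mem_union_right _ hk).frequently
  rw [frequently_atTop] at hfreq_s ⊢
  intro N
  obtain ⟨n, hn, hns⟩ := hfreq_s N
  rcases hns with h | h
  · exact ⟨2 * n, by omega, h⟩
  · exact ⟨2 * n + 1, by omega, h⟩
end
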